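/- For all natural numbers d, k, n with d ≥ 3, 2 ≤ k ≤ d and n ≥ k, there exists a k-uniform hypergraph H on n vertices that admits a linear embedding into ℝ^d and whose strong chromatic number equals n: χˢ(H) = n. (In the paper's notation: χˢ_{d,k}(n) = n for d ≥ 3 and k ≤ d.) -/

import Mathlib

/-- A hypergraph on a vertex type `V`: a finite set of edges, each a finite set of vertices. -/
structure FinHypergraph (V : Type) where
  edges : Finset (Finset V)

namespace FinHypergraph

variable {V : Type}

/-- `H` is `k`-uniform if every edge has exactly `k` vertices. -/
def IsUniform (H : FinHypergraph V) (k : ℕ) : Prop :=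
  ∀ e ∈ H.edges, e.card = k

/-- A (linear) embedding of the `k`-uniform hypergraph `H` into `ℝ^d`:
a map `φ : V → ℝ^d` such that the affine span of every embedded edge has
dimension `k - 1`, and for any two edges the convex hulls intersect exactly in
the convex hull of the image of their common vertices. -/
def HasLinearEmbedding [DecidableEq V] (H : FinHypergraph V) (k d : ℕ) : Prop :=
  ∃ φ : V → EuclideanSpace ℝ (Fin d),
    (∀ e ∈ H.edges,
      Module.finrank ℝ (affineSpan ℝ (φ '' (e : Set V))).direction = k - 1) ∧
    (∀ e₁ ∈ H.edges, ∀ e₂ ∈ H.edges,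
      convexHull ℝ (φ '' ((e₁ ∩ e₂ : Finset V) : Set V)) =
        convexHull ℝ (φ '' (e₁ : Set V)) ∩ convexHull ℝ (φ '' (e₂ : Set V)))

/-- A strong `c`-coloring: a coloring of the vertices injective on every edge. -/
def StrongColorable (H : FinHypergraph V) (c : ℕ) : Prop :=
  ∃ κ : V → Fin c, ∀ e ∈ H.edges, Set.InjOn κ (e : Set V)

/-- The strong chromatic number: least `c` admitting a strong `c`-coloring. -/
noncomputable def strongChromaticNumber (H : FinHypergraph V) : ℕ :=
  sInf {c | H.StrongColorable c}

/-- A weak `c`-coloring: a coloring of the vertices such that no edge is monochromatic. -/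
def WeakColorable (H : FinHypergraph V) (c : ℕ) : Prop :=
  ∃ κ : V → Fin c, ∀ e ∈ H.edges, ∃ u ∈ e, ∃ v ∈ e, κ u ≠ κ v

/-- The weak chromatic number: least `c` admitting a weak `c`-coloring. -/
noncomputable def weakChromaticNumber (H : FinHypergraph V) : ℕ :=
  sInf {c | H.WeakColorable c}

end FinHypergraph

/-!
Embed `c` apex vertices as standard basis vectors of `ℝ^d` and the remaining vertices `v` on the
moment curve `(v, v², v³)` in three further coordinates. An affine function on `ℝ^d` can then take
arbitrary values at the apices and, at the curve points, the values of an arbitrary cubic. Hence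
the apices together with at most four curve points are affinely independent, and two simplices
through all apices meet exactly in their common face as soon as some cubic vanishes on their
common curve vertices and is positive on the other vertices of one and negative on those of the
other.

For `k = 2` (no apex) all pairs are edges, and the cubic is found by interpolation at the at most
four endpoints. For `k ≥ 3` there are `k - 3` apices and the curve parts of the edges are the
triangles `{u, w, w + 1}` with `u < w`; two of them are separated by interpolation when `w = w'`,
and otherwise by a cubic `(M - 2t)((t - b)² - δ)`. In both cases every two vertices share an
edge, so a strong colouring must be injective.
-/

open Finset Polynomial

section Convex

variable {E : Type*} [AddCommGroup E] [Module ℝ E]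

theorem mem_convexHull_setOf_eq_zero {s : Set E} {f : E →ᵃ[ℝ] ℝ} (hf : ∀ y ∈ s, 0 ≤ f y)
    {x : E} (hx : x ∈ convexHull ℝ s) (hfx : f x ≤ 0) :
    x ∈ convexHull ℝ {y ∈ s | f y = 0} := by
  classical
  obtain ⟨ι, t, w, z, hw₀, hw₁, hz, rfl⟩ := (convexHull_eq s).subset hx
  have hf_cm : f (t.centerMass w z) = ∑ i ∈ t, w i * f (z i) := by
    rw [← affineCombination_eq_centerMass hw₁, Finset.map_affineCombination _ _ _ hw₁,
      affineCombination_eq_centerMass hw₁, t.centerMass_eq_of_sum_1 _ hw₁]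
    simp
  have hterm_nonneg : ∀ i ∈ t, 0 ≤ w i * f (z i) :=
    fun i hi => mul_nonneg (hw₀ i hi) (hf _ (hz i hi))
  have hterm : ∀ i ∈ t, w i * f (z i) = 0 :=
    (sum_eq_zero_iff_of_nonneg hterm_nonneg).1 ((hf_cm ▸ hfx).antisymm (sum_nonneg hterm_nonneg))
  rw [← t.centerMass_filter_ne_zero]
  refine centerMass_mem_convexHull _ (fun i hi => hw₀ i (mem_filter.1 hi).1) ?_ fun i hi => ?_
  · rw [sum_filter_ne_zero, hw₁]
    exact one_pos
  · obtain ⟨hi, hwi⟩ := mem_filter.1 hi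
    exact ⟨hz i hi, (mul_eq_zero.1 (hterm i hi)).resolve_left hwi⟩

theorem convexHull_image_inter_of_separating {ι : Type*} (p : ι → E) {A B : Set ι}
    (f : E →ᵃ[ℝ] ℝ) (h₀ : ∀ i ∈ A ∩ B, f (p i) = 0) (hA : ∀ i ∈ A \ B, 0 < f (p i))
    (hB : ∀ i ∈ B \ A, f (p i) < 0) :
    convexHull ℝ (p '' (A ∩ B)) = convexHull ℝ (p '' A) ∩ convexHull ℝ (p '' B) := by
  refine (Set.subset_inter (convexHull_mono (Set.image_mono Set.inter_subset_left))
    (convexHull_mono (Set.image_mono Set.inter_subset_right))).antisymm ?_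
  rintro x ⟨hxA, hxB⟩
  have hfA : ∀ y ∈ p '' A, 0 ≤ f y := by
    rintro _ ⟨i, hi, rfl⟩
    by_cases hiB : i ∈ B
    · exact (h₀ i ⟨hi, hiB⟩).ge
    · exact (hA i ⟨hi, hiB⟩).le
  have hfB : ∀ y ∈ p '' B, f y ≤ 0 := by
    rintro _ ⟨i, hi, rfl⟩
    by_cases hiA : i ∈ A
    · exact (h₀ i ⟨hiA, hi⟩).le
    · exact (hB i ⟨hi, hiA⟩).le
  have hfx : f x ≤ 0 := convexHull_min hfB ((convex_Iic 0).affine_preimage f) hxB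
  refine convexHull_mono ?_ (mem_convexHull_setOf_eq_zero hfA hxA hfx)
  rintro _ ⟨⟨i, hi, rfl⟩, hfi⟩
  by_contra hiAB
  exact (hA i ⟨hi, fun hiB => hiAB ⟨i, ⟨hi, hiB⟩, rfl⟩⟩).ne' hfi

end Convex

theorem affineIndependent_of_forall_exists_affineMap {k V P ι : Type*} [Field k]
    [AddCommGroup V] [Module k V] [AddTorsor V P] (p : ι → P)
    (h : ∀ g : ι → k, ∃ f : P →ᵃ[k] k, ∀ i, f (p i) = g i) : AffineIndependent k p := by
  classical
  rw [affineIndependent_iff_indicator_eq_of_affineCombination_eq]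
  intro s₁ s₂ w₁ w₂ hw₁ hw₂ heq
  funext i
  obtain ⟨f, hf⟩ := h (Pi.single i 1)
  have hf_comb : ∀ (s : Finset ι) (w : ι → k), ∑ j ∈ s, w j = 1 →
      f (s.affineCombination k p w) = Set.indicator (↑s) w i := by
    intro s w hw
    rw [Finset.map_affineCombination _ _ _ hw,
      Finset.affineCombination_eq_linear_combination _ _ _ hw]
    simp [hf, Pi.single_apply, Set.indicator_apply]
  rw [← hf_comb s₁ w₁ hw₁, ← hf_comb s₂ w₂ hw₂, heq]

theorem Polynomial.exists_natDegree_le_eval_eq {F ι : Type*} [Field F] [DecidableEq ι]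
    {s : Finset ι} {x : ι → F} (hx : Set.InjOn x s) (g : ι → F) {m : ℕ} (hs : #s ≤ m + 1) :
    ∃ p : F[X], p.natDegree ≤ m ∧ ∀ i ∈ s, p.eval (x i) = g i := by
  refine ⟨Lagrange.interpolate s x g, ?_, fun i hi => Lagrange.eval_interpolate_at_node g hx hi⟩
  rw [natDegree_le_iff_coeff_eq_zero]
  exact fun N hN => (degree_lt_iff_coeff_zero _ _).1
    ((Lagrange.degree_interpolate_lt g hx).trans_le (by exact_mod_cast hs)) N hN

section ConeMoment

/-- Vertices `v < c` (the apices) go to the standard basis vectors `e_v`, the others to the moment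
curve point `(v, v², …, vᵐ)` written in the coordinates `c, …, c + m - 1`. -/
def coneMomentCoord (c m v i : ℕ) : ℝ :=
  if v < c then (if i = v then 1 else 0)
  else ∑ j ∈ range m, if i = c + j then (v : ℝ) ^ (j + 1) else 0

noncomputable def coneMomentMap (c m d v : ℕ) : EuclideanSpace ℝ (Fin d) :=
  WithLp.toLp 2 fun i => coneMomentCoord c m v i

theorem exists_affineMap_toLp_eq (d : ℕ) (a : ℕ → ℝ) (b : ℝ) :
    ∃ f : EuclideanSpace ℝ (Fin d) →ᵃ[ℝ] ℝ, ∀ x : ℕ → ℝ,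
      f (WithLp.toLp 2 fun i => x i) = b + ∑ i ∈ range d, a i * x i := by
  refine ⟨AffineMap.const ℝ _ b + (innerₛₗ ℝ (WithLp.toLp 2 fun i : Fin d => a i)).toAffineMap,
    fun x => ?_⟩
  simp [PiLp.inner_apply, mul_comm, Fin.sum_univ_eq_sum_range (fun i => a i * x i)]

variable {c m d : ℕ}

theorem exists_affineMap_coneMomentMap (hd : c + m ≤ d) (g : ℕ → ℝ) {p : ℝ[X]}
    (hp : p.natDegree ≤ m) : ∃ f : EuclideanSpace ℝ (Fin d) →ᵃ[ℝ] ℝ, ∀ v,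
      f (coneMomentMap c m d v) = if v < c then g v else p.eval (v : ℝ) := by
  obtain ⟨f, hf⟩ := exists_affineMap_toLp_eq d
    (fun i => if i < c then g i - p.coeff 0 else p.coeff (i - c + 1)) (p.coeff 0)
  refine ⟨f, fun v => ?_⟩
  rw [coneMomentMap, hf]
  simp only [coneMomentCoord]
  split_ifs with hv
  · simp [hv, show v < d by omega]
  · simp only [mul_sum, mul_ite, mul_zero]
    rw [sum_comm, eval_eq_sum_range' (Nat.lt_succ_of_le hp), sum_range_succ', pow_zero, mul_one,
      add_comm]
    congr 1
    refine sum_congr rfl fun j hj => ?_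
    simp [show c + j < d by have := mem_range.1 hj; omega]

theorem exists_affineMap_coneMomentMap_eqOn (hd : c + m ≤ d) {A : Finset ℕ} (hA : #A ≤ m + 1)
    (g : ℕ → ℝ) : ∃ f : EuclideanSpace ℝ (Fin d) →ᵃ[ℝ] ℝ,
      ∀ v ∈ range c ∪ A, f (coneMomentMap c m d v) = g v := by
  obtain ⟨p, hp, hpA⟩ := exists_natDegree_le_eval_eq (Nat.cast_injective.injOn (s := ↑A)) g hA
  obtain ⟨f, hf⟩ := exists_affineMap_coneMomentMap hd g hp
  refine ⟨f, fun v hv => ?_⟩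
  rw [hf]
  split_ifs with hvc
  · rfl
  · exact hpA v ((mem_union.1 hv).resolve_left (by simpa using hvc))

theorem finrank_direction_affineSpan_coneMomentMap (hd : c + m ≤ d) {A : Finset ℕ}
    (hA : #A ≤ m + 1) :
    Module.finrank ℝ (affineSpan ℝ (coneMomentMap c m d '' ↑(range c ∪ A))).direction =
      #(range c ∪ A) - 1 := by
  set S := range c ∪ A
  have hind : AffineIndependent ℝ fun v : S => coneMomentMap c m d v := by
    refine affineIndependent_of_forall_exists_affineMap _ fun g => ?_
    obtain ⟨f, hf⟩ := exists_affineMap_coneMomentMap_eqOn hd hA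
      fun v => if hv : v ∈ S then g ⟨v, hv⟩ else 0
    exact ⟨f, fun v => by simp [hf v v.2]⟩
  rcases S.eq_empty_or_nonempty with hS | hS
  · simp [hS]
  rw [direction_affineSpan, ← Subtype.range_coe (s := (S : Set ℕ)), ← Set.range_comp]
  exact hind.finrank_vectorSpan (by simp [Nat.sub_add_cancel hS.card_pos])

end ConeMoment

theorem one_le_sq_natCast_sub {a b : ℕ} (h : a ≠ b) : 1 ≤ ((a : ℝ) - b) ^ 2 := by
  rcases h.lt_or_gt with h | h
  · have : (a : ℝ) + 1 ≤ b := by exact_mod_cast h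
    nlinarith
  · have : (b : ℝ) + 1 ≤ a := by exact_mod_cast h
    nlinarith

def SeparatedByDegree (m : ℕ) (A B : Finset ℕ) : Prop :=
  ∃ p : ℝ[X], p.natDegree ≤ m ∧ (∀ a ∈ A ∩ B, p.eval (a : ℝ) = 0) ∧
    (∀ a ∈ A \ B, 0 < p.eval (a : ℝ)) ∧ ∀ b ∈ B \ A, p.eval (b : ℝ) < 0

namespace SeparatedByDegree

variable {m : ℕ} {A B : Finset ℕ}

theorem symm (h : SeparatedByDegree m A B) : SeparatedByDegree m B A := by
  obtain ⟨p, hp, h₀, hA, hB⟩ := h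
  refine ⟨-p, by rwa [natDegree_neg], fun a ha => ?_, fun a ha => ?_, fun a ha => ?_⟩
  · simp [h₀ a (inter_comm A B ▸ ha)]
  · simpa using hB a ha
  · simpa using hA a ha

theorem of_card_union_le (h : #(A ∪ B) ≤ m + 1) : SeparatedByDegree m A B := by
  classical
  obtain ⟨p, hp, hpg⟩ := exists_natDegree_le_eval_eq (Nat.cast_injective.injOn (s := ↑(A ∪ B)))
    (fun a => if a ∈ B then (if a ∈ A then 0 else -1 : ℝ) else 1) h
  refine ⟨p, hp, fun a ha => ?_, fun a ha => ?_, fun a ha => ?_⟩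
  · obtain ⟨haA, haB⟩ := mem_inter.1 ha
    simp [hpg a (mem_union_left _ haA), haA, haB]
  · obtain ⟨haA, haB⟩ := mem_sdiff.1 ha
    simp [hpg a (mem_union_left _ haA), haB]
  · obtain ⟨haB, haA⟩ := mem_sdiff.1 ha
    simp [hpg a (mem_union_right _ haB), haA, haB]

/-- The linear factor of `(M - 2t)((t - b)² - δ)` separates the integers below `M / 2` from those
above it, and its quadratic factor is positive at every integer other than `b`. -/
theorem of_linear_mul_quadratic (M b : ℕ) {δ : ℝ} (hδ : δ < 1)
    (h₀ : ∀ a ∈ A ∩ B, 2 * a = M ∨ (a = b ∧ δ = 0))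
    (hA : ∀ a ∈ A \ B, 2 * a < M ∧ a ≠ b)
    (hB : ∀ a ∈ B \ A, (M < 2 * a ∧ a ≠ b) ∨ (2 * a < M ∧ a = b ∧ 0 < δ)) :
    SeparatedByDegree 3 A B := by
  have heval : ∀ a : ℕ, ((C (M : ℝ) - 2 * X) * ((X - C (b : ℝ)) ^ 2 - C δ)).eval (a : ℝ) =
      ((M : ℝ) - 2 * a) * (((a : ℝ) - b) ^ 2 - δ) := fun a => by simp
  have hlin : ∀ a : ℕ, 2 * a < M → 0 < (M : ℝ) - 2 * a := fun a h => by
    have : ((2 * a : ℕ) : ℝ) < M := by exact_mod_cast h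
    push_cast at this; linarith
  have hlin' : ∀ a : ℕ, M < 2 * a → (M : ℝ) - 2 * a < 0 := fun a h => by
    have : (M : ℝ) < ((2 * a : ℕ) : ℝ) := by exact_mod_cast h
    push_cast at this; linarith
  have hquad : ∀ a : ℕ, a ≠ b → 0 < ((a : ℝ) - b) ^ 2 - δ := fun a h => by
    linarith [one_le_sq_natCast_sub h]
  refine ⟨(C (M : ℝ) - 2 * X) * ((X - C (b : ℝ)) ^ 2 - C δ), by compute_degree!,
    fun a ha => ?_, fun a ha => ?_, fun a ha => ?_⟩ <;> rw [heval]
  · rcases h₀ a ha with h | ⟨rfl, rfl⟩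
    · have : ((2 * a : ℕ) : ℝ) = M := by exact_mod_cast h
      push_cast at this
      simp [← this]
    · simp
  · exact mul_pos (hlin a (hA a ha).1) (hquad a (hA a ha).2)
  · rcases hB a ha with ⟨h, hab⟩ | ⟨h, rfl, hδ₀⟩
    · exact mul_neg_of_neg_of_pos (hlin' a h) (hquad a hab)
    · exact mul_neg_of_pos_of_neg (hlin a h) (by simpa using hδ₀)

theorem triangle_of_lt {u w u' w' : ℕ} (hu : u < w) (hu' : u' < w') (hw : w < w') :
    SeparatedByDegree 3 {u, w, w + 1} {u', w', w' + 1} := by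
  by_cases hfar : w + 2 ≤ u'
  · -- `w' + 2` is none of the vertices, so the quadratic factor is positive on all of them.
    refine .of_linear_mul_quadratic (2 * w + 3) (w' + 2) (δ := 1 / 4) (by norm_num)
      ?_ ?_ ?_ <;> intro a ha <;> simp at ha ⊢ <;> omega
  by_cases hu'A : u' ∈ ({u, w, w + 1} : Finset ℕ)
  · simp only [mem_insert, mem_singleton] at hu'A
    refine .of_linear_mul_quadratic (w + w' + 1) u' zero_lt_one ?_ ?_ ?_ <;>
      intro a ha <;> simp at ha ⊢ <;> omega
  · simp only [mem_insert, mem_singleton] at hu'A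
    refine .of_linear_mul_quadratic (w + w' + 1) u' (δ := 1 / 4) (by norm_num) ?_ ?_ ?_ <;>
      intro a ha <;> norm_num at ha ⊢ <;> omega

theorem triangle {u w u' w' : ℕ} (hu : u < w) (hu' : u' < w') :
    SeparatedByDegree 3 {u, w, w + 1} {u', w', w' + 1} := by
  rcases lt_trichotomy w w' with hw | rfl | hw
  · exact .triangle_of_lt hu hu' hw
  · refine .of_card_union_le ((card_le_card fun a ha => ?_).trans (card_le_four (a := u)
      (b := u') (c := w) (d := w + 1)))
    simp only [mem_union, mem_insert, mem_singleton] at ha ⊢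
    omega
  · exact (triangle_of_lt hu' hu hw).symm

end SeparatedByDegree

theorem convexHull_coneMomentMap_inter {c m d : ℕ} (hd : c + m ≤ d) {A B : Finset ℕ}
    (h : SeparatedByDegree m A B) :
    convexHull ℝ (coneMomentMap c m d '' ↑((range c ∪ A) ∩ (range c ∪ B))) =
      convexHull ℝ (coneMomentMap c m d '' ↑(range c ∪ A)) ∩
        convexHull ℝ (coneMomentMap c m d '' ↑(range c ∪ B)) := by
  obtain ⟨p, hp, h₀, hA, hB⟩ := h
  obtain ⟨f, hf⟩ := exists_affineMap_coneMomentMap hd 0 hp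
  rw [coe_inter]
  refine convexHull_image_inter_of_separating _ f (fun i hi => ?_) (fun i hi => ?_)
    (fun i hi => ?_) <;> simp only [Set.mem_inter_iff, Set.mem_sdiff, mem_coe, mem_union,
      mem_range] at hi <;> rw [hf]
  · split_ifs with hic
    · rfl
    · exact h₀ i (mem_inter.2 ⟨hi.1.resolve_left hic, hi.2.resolve_left hic⟩)
  · have hic : ¬ i < c := fun hic => hi.2 (Or.inl hic)
    rw [if_neg hic]
    exact hA i (mem_sdiff.2 ⟨hi.1.resolve_left hic, fun hiB => hi.2 (Or.inr hiB)⟩)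
  · have hic : ¬ i < c := fun hic => hi.2 (Or.inl hic)
    rw [if_neg hic]
    exact hB i (mem_sdiff.2 ⟨hi.1.resolve_left hic, fun hiA => hi.2 (Or.inr hiA)⟩)

theorem FinHypergraph.strongChromaticNumber_eq_card {V : Type} [Fintype V]
    (H : FinHypergraph V) (h : ∀ x y, x ≠ y → ∃ e ∈ H.edges, x ∈ e ∧ y ∈ e) :
    H.strongChromaticNumber = Fintype.card V := by
  have hcard : H.StrongColorable (Fintype.card V) :=
    ⟨Fintype.equivFin V, fun _ _ => (Fintype.equivFin V).injective.injOn⟩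
  refine (Nat.sInf_le hcard).antisymm (le_csInf ⟨_, hcard⟩ fun c ⟨κ, hκ⟩ => ?_)
  by_contra! hc
  obtain ⟨x, y, hxy, hκxy⟩ := Fintype.exists_ne_map_eq_of_card_lt κ (by simpa using hc)
  obtain ⟨e, he, hx, hy⟩ := h x y hxy
  exact hxy (hκ e he (mem_coe.2 hx) (mem_coe.2 hy) hκxy)

section FinPreimage

variable {n : ℕ} {S : Finset ℕ}

theorem Fin.image_val_preimage_val (hS : S ⊆ range n) :
    (S.preimage (Fin.val : Fin n → ℕ) Fin.val_injective.injOn).image Fin.val = S := by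
  classical
  rw [image_preimage, filter_true_of_mem fun x hx => ⟨⟨x, mem_range.1 (hS hx)⟩, rfl⟩]

theorem Fin.card_preimage_val (hS : S ⊆ range n) :
    #(S.preimage (Fin.val : Fin n → ℕ) Fin.val_injective.injOn) = #S := by
  rw [← card_image_of_injective _ Fin.val_injective, image_val_preimage_val hS]

end FinPreimage

noncomputable def apexJoin (n c : ℕ) (F : Finset (Finset ℕ)) : FinHypergraph (Fin n) :=
  ⟨F.image fun A => (range c ∪ A).preimage Fin.val Fin.val_injective.injOn⟩

section ApexJoin

variable {n c j m d : ℕ} {F : Finset (Finset ℕ)}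

theorem range_union_subset_range (hcn : c ≤ n) {A : Finset ℕ} (hA : A ⊆ Ico c n) :
    range c ∪ A ⊆ range n :=
  union_subset (range_subset_range.2 hcn) (hA.trans fun _ hx => mem_range.2 (mem_Ico.1 hx).2)

theorem card_range_union {A : Finset ℕ} (hA : ∀ x ∈ A, c ≤ x) : #(range c ∪ A) = c + #A := by
  rw [card_union_of_disjoint (disjoint_left.2 fun x hx hxA => by
    have := hA x hxA; simp at hx; omega), card_range]

theorem apexJoin_isUniform (hcn : c ≤ n) (hsub : ∀ A ∈ F, A ⊆ Ico c n)
    (hcard : ∀ A ∈ F, #A = j) : (apexJoin n c F).IsUniform (c + j) := by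
  rintro _ he
  obtain ⟨A, hA, rfl⟩ := mem_image.1 he
  rw [Fin.card_preimage_val (range_union_subset_range hcn (hsub A hA)),
    card_range_union fun x hx => (mem_Ico.1 (hsub A hA hx)).1, hcard A hA]

theorem apexJoin_hasLinearEmbedding (hd : c + m ≤ d) (hcn : c ≤ n)
    (hsub : ∀ A ∈ F, A ⊆ Ico c n) (hcard : ∀ A ∈ F, #A = j) (hj : j ≤ m + 1)
    (hsep : ∀ A ∈ F, ∀ B ∈ F, SeparatedByDegree m A B) :
    (apexJoin n c F).HasLinearEmbedding (c + j) d := by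
  have himage : ∀ S ⊆ range n, (coneMomentMap c m d ∘ Fin.val) ''
      (S.preimage (Fin.val : Fin n → ℕ) Fin.val_injective.injOn : Set (Fin n)) =
        coneMomentMap c m d '' ↑S :=
    fun S hS => by rw [Set.image_comp, ← coe_image, Fin.image_val_preimage_val hS]
  refine ⟨coneMomentMap c m d ∘ Fin.val, ?_, ?_⟩
  · rintro _ he
    obtain ⟨A, hA, rfl⟩ := mem_image.1 he
    rw [himage _ (range_union_subset_range hcn (hsub A hA)),
      finrank_direction_affineSpan_coneMomentMap hd (hcard A hA ▸ hj),
      card_range_union fun x hx => (mem_Ico.1 (hsub A hA hx)).1, hcard A hA]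
  · rintro _ he₁ _ he₂
    obtain ⟨A, hA, rfl⟩ := mem_image.1 he₁
    obtain ⟨B, hB, rfl⟩ := mem_image.1 he₂
    have hA' := range_union_subset_range hcn (hsub A hA)
    rw [← preimage_inter, himage _ (inter_subset_left.trans hA'), himage _ hA',
      himage _ (range_union_subset_range hcn (hsub B hB))]
    exact convexHull_coneMomentMap_inter hd (hsep A hA B hB)

theorem apexJoin_strongChromaticNumber (hcn : c < n)
    (hcover : ∀ x ∈ Ico c n, ∀ y ∈ Ico c n, ∃ A ∈ F, x ∈ A ∧ y ∈ A) :
    (apexJoin n c F).strongChromaticNumber = n := by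
  rw [FinHypergraph.strongChromaticNumber_eq_card, Fintype.card_fin]
  intro x y _
  obtain ⟨A, hA, hxA, hyA⟩ := hcover (max c x) (by simp; omega) (max c y) (by simp; omega)
  have hmem : ∀ z : Fin n, max c z ∈ A → (z : ℕ) < c ∨ (z : ℕ) ∈ A := fun z hz => by
    by_cases hzc : (z : ℕ) < c
    · exact Or.inl hzc
    · exact Or.inr (by rwa [max_eq_right (not_lt.1 hzc)] at hz)
  refine ⟨_, mem_image_of_mem _ hA, ?_, ?_⟩ <;> simp only [mem_preimage, mem_union, mem_range]
  exacts [hmem x hxA, hmem y hyA]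

end ApexJoin

def triangleFamily (c n : ℕ) : Finset (Finset ℕ) :=
  ((Ico c n ×ˢ Ico c n).filter fun q => q.1 < q.2 ∧ q.2 + 1 < n).image
    fun q => {q.1, q.2, q.2 + 1}

section Triangles

variable {c n : ℕ} {A : Finset ℕ}

theorem mem_triangleFamily :
    A ∈ triangleFamily c n ↔ ∃ u w, c ≤ u ∧ u < w ∧ w + 1 < n ∧ A = {u, w, w + 1} := by
  simp only [triangleFamily, mem_image, mem_filter, mem_product, mem_Ico, Prod.exists]
  constructor
  · rintro ⟨u, w, ⟨⟨⟨hcu, -⟩, -⟩, huw, hwn⟩, rfl⟩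
    exact ⟨u, w, hcu, huw, hwn, rfl⟩
  · rintro ⟨u, w, hcu, huw, hwn, rfl⟩
    exact ⟨u, w, ⟨⟨⟨hcu, by omega⟩, by omega, by omega⟩, huw, hwn⟩, rfl⟩

theorem subset_Ico_of_mem_triangleFamily (hA : A ∈ triangleFamily c n) : A ⊆ Ico c n := by
  obtain ⟨u, w, hcu, huw, hwn, rfl⟩ := mem_triangleFamily.1 hA
  intro x hx
  simp only [mem_insert, mem_singleton, mem_Ico] at hx ⊢
  omega

theorem card_of_mem_triangleFamily (hA : A ∈ triangleFamily c n) : #A = 3 := by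
  obtain ⟨u, w, -, huw, -, rfl⟩ := mem_triangleFamily.1 hA
  rw [card_insert_of_notMem (by simp; omega), card_pair (by omega)]

theorem separatedByDegree_of_mem_triangleFamily {B : Finset ℕ} (hA : A ∈ triangleFamily c n)
    (hB : B ∈ triangleFamily c n) : SeparatedByDegree 3 A B := by
  obtain ⟨u, w, -, huw, -, rfl⟩ := mem_triangleFamily.1 hA
  obtain ⟨u', w', -, huw', -, rfl⟩ := mem_triangleFamily.1 hB
  exact .triangle huw huw'

theorem exists_mem_triangleFamily (hn : c + 3 ≤ n) {x y : ℕ} (hx : x ∈ Ico c n)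
    (hy : y ∈ Ico c n) : ∃ A ∈ triangleFamily c n, x ∈ A ∧ y ∈ A := by
  rw [mem_Ico] at hx hy
  obtain ⟨u, w, hcu, huw, hwn, hxA, hyA⟩ : ∃ u w, c ≤ u ∧ u < w ∧ w + 1 < n ∧
      (x = u ∨ x = w ∨ x = w + 1) ∧ (y = u ∨ y = w ∨ y = w + 1) := by
    by_cases hfar : min x y + 1 < max x y
    · by_cases hlast : max x y + 1 < n
      · exact ⟨min x y, max x y, by omega⟩
      · exact ⟨min x y, max x y - 1, by omega⟩
    · by_cases hhigh : c + 2 ≤ max x y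
      · exact ⟨c, max x y - 1, by omega⟩
      · exact ⟨c, c + 1, by omega⟩
  exact ⟨_, mem_triangleFamily.2 ⟨u, w, hcu, huw, hwn, rfl⟩, by simpa using hxA,
    by simpa using hyA⟩

end Triangles

theorem exists_mem_powersetCard_two {n x y : ℕ} (hn : 2 ≤ n) (hx : x ∈ range n)
    (hy : y ∈ range n) : ∃ A ∈ (range n).powersetCard 2, x ∈ A ∧ y ∈ A := by
  obtain ⟨A, hxyA, hA, hcard⟩ := exists_subsuperset_card_eq (s := {x, y})
    (insert_subset hx (singleton_subset_iff.2 hy)) card_le_two (by simpa using hn)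
  exact ⟨A, mem_powersetCard.2 ⟨hA, hcard⟩, hxyA (by simp), hxyA (by simp)⟩

/-- Corollary 3.8: `χˢ_{d,k}(n) = n` for `d ≥ 3` and `2 ≤ k ≤ d`. -/
theorem strong_lower_bound_d_k (d k n : ℕ) (hd : 3 ≤ d) (hk2 : 2 ≤ k) (hkd : k ≤ d)
    (hn : k ≤ n) :
    ∃ H : FinHypergraph (Fin n), H.IsUniform k ∧ H.HasLinearEmbedding k d ∧
      H.strongChromaticNumber = n := by
  rcases hk2.eq_or_lt with rfl | hk3
  · have hcard : ∀ A ∈ (range n).powersetCard 2, #A = 2 := fun A hA => (mem_powersetCard.1 hA).2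
    have hsub : ∀ A ∈ (range n).powersetCard 2, A ⊆ Ico 0 n := fun A hA => by
      rw [← range_eq_Ico]; exact (mem_powersetCard.1 hA).1
    have hsep : ∀ A ∈ (range n).powersetCard 2, ∀ B ∈ (range n).powersetCard 2,
        SeparatedByDegree 3 A B := fun A hA B hB =>
      .of_card_union_le ((card_union_le A B).trans (by rw [hcard A hA, hcard B hB]))
    exact ⟨apexJoin n 0 ((range n).powersetCard 2), apexJoin_isUniform n.zero_le hsub hcard,
      apexJoin_hasLinearEmbedding hd n.zero_le hsub hcard (by norm_num) hsep,
      apexJoin_strongChromaticNumber (by omega) fun x hx y hy =>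
        exists_mem_powersetCard_two hn (by rwa [range_eq_Ico]) (by rwa [range_eq_Ico])⟩
  · obtain ⟨c, rfl⟩ : ∃ c, k = c + 3 := ⟨k - 3, by omega⟩
    exact ⟨apexJoin n c (triangleFamily c n),
      apexJoin_isUniform (by omega) (fun _ => subset_Ico_of_mem_triangleFamily)
        fun _ => card_of_mem_triangleFamily,
      apexJoin_hasLinearEmbedding hkd (by omega) (fun _ => subset_Ico_of_mem_triangleFamily)
        (fun _ => card_of_mem_triangleFamily) (by norm_num)
        fun _ hA _ hB => separatedByDegree_of_mem_triangleFamily hA hB,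
      apexJoin_strongChromaticNumber (by omega) fun _ hx _ hy =>
        exists_mem_triangleFamily hn hx hy⟩
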